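/- arXiv:2012.01405 — 5 statements merged into one kernel-verified Lean document; each statement's English description precedes it below -/
import Mathlib

section
/- If y and z are independent and conditionally independent given x, then the mutual information I(x; y, z) equals I(x; y) + I(x; z). -/
/-! Wherever `p(x,y,z) > 0`, conditional independence `p(x,y,z) p(x) = p(x,y) p(x,z)` and
independence `p(y,z) = p(y) p(z)` factor the ratio `p(x,y,z) / (p(x) p(y,z))` as
`(p(x,y) / (p(x) p(y))) · (p(x,z) / (p(x) p(z)))`, so its logarithm splits into a sum.
Summing out `z`, resp. `y`, in the two halves leaves `I(x; y)` and `I(x; z)`. -/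

open Real Finset

lemma sum_pos_of_nonneg_of_pos {ι : Type*} [Fintype ι] {f : ι → ℝ} (hf : ∀ i, 0 ≤ f i)
    (i : ι) (hi : 0 < f i) : 0 < ∑ j, f j :=
  sum_pos' (fun j _ => hf j) ⟨i, mem_univ i, hi⟩

lemma sum_sum_pos_of_nonneg_of_pos {ι κ : Type*} [Fintype ι] [Fintype κ] {f : ι → κ → ℝ}
    (hf : ∀ i j, 0 ≤ f i j) (i : ι) (j : κ) (hij : 0 < f i j) : 0 < ∑ i, ∑ j, f i j :=
  sum_pos_of_nonneg_of_pos (fun i => sum_nonneg fun j _ => hf i j) i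
    (sum_pos_of_nonneg_of_pos (hf i) j hij)

lemma log_div_mul_mul_eq_add {pxyz px py pz pxy pxz : ℝ} (hpx : px ≠ 0) (hpy : py ≠ 0)
    (hpz : pz ≠ 0) (hpxy : pxy ≠ 0) (hpxz : pxz ≠ 0) (hcond : pxyz * px = pxy * pxz) :
    log (pxyz / (px * (py * pz))) = log (pxy / (px * py)) + log (pxz / (px * pz)) := by
  have hratio : pxyz / (px * (py * pz)) = pxy / (px * py) * (pxz / (px * pz)) := by
    field_simp
    linear_combination hcond
  rw [hratio, log_mul (by positivity) (by positivity)]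

lemma sum_sum_sum_mul_eq_sum_sum_mul_marginal_last {α β γ : Type*}
    [Fintype α] [Fintype β] [Fintype γ]
    (p : α → β → γ → ℝ) (f : α → β → ℝ) :
    ∑ x, ∑ y, ∑ z, p x y z * f x y = ∑ x, ∑ y, (∑ z, p x y z) * f x y := by
  simp only [sum_mul]

lemma sum_sum_sum_mul_eq_sum_sum_mul_marginal_mid {α β γ : Type*}
    [Fintype α] [Fintype β] [Fintype γ]
    (p : α → β → γ → ℝ) (g : α → γ → ℝ) :
    ∑ x, ∑ y, ∑ z, p x y z * g x z = ∑ x, ∑ z, (∑ y, p x y z) * g x z := by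
  simp only [sum_mul]
  exact sum_congr rfl fun x _ => sum_comm

theorem stmt_0_general {α β γ : Type*} [Fintype α] [Fintype β] [Fintype γ]
    (p : α → β → γ → ℝ)
    (hnn : ∀ x y z, 0 ≤ p x y z)
    (px : α → ℝ) (py : β → ℝ) (pz : γ → ℝ)
    (pxy : α → β → ℝ) (pxz : α → γ → ℝ) (pyz : β → γ → ℝ)
    (hpx : ∀ x, px x = ∑ y, ∑ z, p x y z)
    (hpy : ∀ y, py y = ∑ x, ∑ z, p x y z)
    (hpz : ∀ z, pz z = ∑ x, ∑ y, p x y z)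
    (hpxy : ∀ x y, pxy x y = ∑ z, p x y z)
    (hpxz : ∀ x z, pxz x z = ∑ y, p x y z)
    (hindep : ∀ y z, pyz y z = py y * pz z)
    (hcond : ∀ x y z, 0 < px x → p x y z * px x = pxy x y * pxz x z) :
    ∑ x, ∑ y, ∑ z, p x y z * Real.log (p x y z / (px x * pyz y z))
      = (∑ x, ∑ y, pxy x y * Real.log (pxy x y / (px x * py y)))
        + ∑ x, ∑ z, pxz x z * Real.log (pxz x z / (px x * pz z)) := by
  have hsplit : ∀ x y z, p x y z * log (p x y z / (px x * pyz y z))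
      = p x y z * log (pxy x y / (px x * py y)) + p x y z * log (pxz x z / (px x * pz z)) := by
    intro x y z
    rcases (hnn x y z).eq_or_lt with hzero | hpos
    · simp [← hzero]
    have hpx_pos : 0 < px x := hpx x ▸ sum_sum_pos_of_nonneg_of_pos (hnn x) y z hpos
    have hpy_pos : 0 < py y :=
      hpy y ▸ sum_sum_pos_of_nonneg_of_pos (fun x z => hnn x y z) x z hpos
    have hpz_pos : 0 < pz z :=
      hpz z ▸ sum_sum_pos_of_nonneg_of_pos (fun x y => hnn x y z) x y hpos
    have hpxy_pos : 0 < pxy x y := hpxy x y ▸ sum_pos_of_nonneg_of_pos (hnn x y) z hpos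
    have hpxz_pos : 0 < pxz x z :=
      hpxz x z ▸ sum_pos_of_nonneg_of_pos (fun y => hnn x y z) y hpos
    rw [hindep, log_div_mul_mul_eq_add hpx_pos.ne' hpy_pos.ne' hpz_pos.ne' hpxy_pos.ne'
      hpxz_pos.ne' (hcond x y z hpx_pos), mul_add]
  simp only [hsplit, sum_add_distrib, sum_sum_sum_mul_eq_sum_sum_mul_marginal_last,
    sum_sum_sum_mul_eq_sum_sum_mul_marginal_mid, ← hpxy, ← hpxz]

theorem stmt_0 {α β γ : Type*} [Fintype α] [Fintype β] [Fintype γ]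
    (p : α → β → γ → ℝ)
    (hnn : ∀ x y z, 0 ≤ p x y z)
    (hsum : ∑ x, ∑ y, ∑ z, p x y z = 1)
    (px : α → ℝ) (py : β → ℝ) (pz : γ → ℝ)
    (pxy : α → β → ℝ) (pxz : α → γ → ℝ) (pyz : β → γ → ℝ)
    (hpx : ∀ x, px x = ∑ y, ∑ z, p x y z)
    (hpy : ∀ y, py y = ∑ x, ∑ z, p x y z)
    (hpz : ∀ z, pz z = ∑ x, ∑ y, p x y z)
    (hpxy : ∀ x y, pxy x y = ∑ z, p x y z)
    (hpxz : ∀ x z, pxz x z = ∑ y, p x y z)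
    (hpyz : ∀ y z, pyz y z = ∑ x, p x y z)
    (hindep : ∀ y z, pyz y z = py y * pz z)
    (hcond : ∀ x y z, 0 < px x → p x y z * px x = pxy x y * pxz x z) :
    ∑ x, ∑ y, ∑ z, p x y z * Real.log (p x y z / (px x * pyz y z))
      = (∑ x, ∑ y, pxy x y * Real.log (pxy x y / (px x * py y)))
        + ∑ x, ∑ z, pxz x z * Real.log (pxz x z / (px x * pz z)) :=
  stmt_0_general p hnn px py pz pxy pxz pyz hpx hpy hpz hpxy hpxz hindep hcond
end

section
/- Under the independence and conditional independence assumptions, the conditional mutual information I(x; y | z) equals I(x; y). -/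
/-!
Wherever `p(x,y,z) > 0` the marginals `p(x)`, `p(z)`, `p(x,z)` are positive, and the two
independence assumptions turn `p(x,y,z) p(z) / (p(x,z) p(y) p(z))` into `p(x,y) / (p(x) p(y))`,
which no longer depends on `z`; summing over `z` then gives `I(x; y)`.
-/

open Finset

lemma sum_sum_pos_of_pos {ι κ : Type*} [Fintype ι] [Fintype κ] {f : ι → κ → ℝ}
    (hf : ∀ i j, 0 ≤ f i j) {i : ι} {j : κ} (h : 0 < f i j) : 0 < ∑ i, ∑ j, f i j :=
  sum_pos' (fun i _ => sum_nonneg fun j _ => hf i j)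
    ⟨i, mem_univ _, sum_pos' (fun j _ => hf i j) ⟨j, mem_univ _, h⟩⟩

lemma div_eq_div_of_condIndep {p px py pz pxy pxz : ℝ} (hpx : px ≠ 0) (hpz : pz ≠ 0)
    (hpxz : pxz ≠ 0) (hcond : p * px = pxy * pxz) :
    p * pz / (pxz * (py * pz)) = pxy / (px * py) := by
  rw [eq_div_of_mul_eq hpx hcond]
  field_simp

theorem stmt_1_general {α β γ : Type*} [Fintype α] [Fintype β] [Fintype γ]
    (p : α → β → γ → ℝ)
    (hnn : ∀ x y z, 0 ≤ p x y z)
    (px : α → ℝ) (py : β → ℝ) (pz : γ → ℝ)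
    (pxy : α → β → ℝ) (pxz : α → γ → ℝ) (pyz : β → γ → ℝ)
    (hpx : ∀ x, px x = ∑ y, ∑ z, p x y z)
    (hpz : ∀ z, pz z = ∑ x, ∑ y, p x y z)
    (hpxy : ∀ x y, pxy x y = ∑ z, p x y z)
    (hpxz : ∀ x z, pxz x z = ∑ y, p x y z)
    (hindep : ∀ y z, pyz y z = py y * pz z)
    (hcond : ∀ x y z, 0 < px x → p x y z * px x = pxy x y * pxz x z) :
    ∑ x, ∑ y, ∑ z, p x y z * Real.log (p x y z * pz z / (pxz x z * pyz y z))
      = ∑ x, ∑ y, pxy x y * Real.log (pxy x y / (px x * py y)) := by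
  refine sum_congr rfl fun x _ => sum_congr rfl fun y _ => ?_
  calc ∑ z, p x y z * Real.log (p x y z * pz z / (pxz x z * pyz y z))
      = ∑ z, p x y z * Real.log (pxy x y / (px x * py y)) := sum_congr rfl fun z _ => ?_
    _ = pxy x y * Real.log (pxy x y / (px x * py y)) := by rw [← sum_mul, hpxy]
  rcases (hnn x y z).eq_or_lt with hzero | hpos
  · simp [← hzero]
  have hpx_pos : 0 < px x := hpx x ▸ sum_sum_pos_of_pos (hnn x) hpos
  have hpz_pos : 0 < pz z := hpz z ▸ sum_sum_pos_of_pos (fun x y => hnn x y z) hpos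
  have hpxz_pos : 0 < pxz x z :=
    hpxz x z ▸ sum_pos' (fun y _ => hnn x y z) ⟨y, mem_univ _, hpos⟩
  rw [hindep, div_eq_div_of_condIndep hpx_pos.ne' hpz_pos.ne' hpxz_pos.ne'
    (hcond x y z hpx_pos)]

theorem stmt_1 {α β γ : Type*} [Fintype α] [Fintype β] [Fintype γ]
    (p : α → β → γ → ℝ)
    (hnn : ∀ x y z, 0 ≤ p x y z)
    (hsum : ∑ x, ∑ y, ∑ z, p x y z = 1)
    (px : α → ℝ) (py : β → ℝ) (pz : γ → ℝ)
    (pxy : α → β → ℝ) (pxz : α → γ → ℝ) (pyz : β → γ → ℝ)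
    (hpx : ∀ x, px x = ∑ y, ∑ z, p x y z)
    (hpy : ∀ y, py y = ∑ x, ∑ z, p x y z)
    (hpz : ∀ z, pz z = ∑ x, ∑ y, p x y z)
    (hpxy : ∀ x y, pxy x y = ∑ z, p x y z)
    (hpxz : ∀ x z, pxz x z = ∑ y, p x y z)
    (hpyz : ∀ y z, pyz y z = ∑ x, p x y z)
    (hindep : ∀ y z, pyz y z = py y * pz z)
    (hcond : ∀ x y z, 0 < px x → p x y z * px x = pxy x y * pxz x z) :
    ∑ x, ∑ y, ∑ z, p x y z * Real.log (p x y z * pz z / (pxz x z * pyz y z))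
      = ∑ x, ∑ y, pxy x y * Real.log (pxy x y / (px x * py y)) :=
  stmt_1_general p hnn px py pz pxy pxz pyz hpx hpz hpxy hpxz hindep hcond
end

section
/- Under the disentanglement assumptions, the cross-view mutual information is bounded below by the mutual information between the two pose representations: I(x^i; z_p^j, z_v^i) ≥ I(z_p^i; z_p^j). -/
/-!
On the support of the joint law the Markov and conditional-independence hypotheses give
`p(x,b,v) / (p(x) p(b,v)) = p(a,b) / (p(a) p(b)) · p(x,a,v,b) / q(x,a,v,b)` for the reference
law `q(x,a,v,b) = p(x) p(v) p(a | x,v) p(b | a)`, whose total mass is at most `1`. Hence the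
difference of the two mutual informations is `∑ p log (p / q) ≥ ∑ p - ∑ q ≥ 0` (Gibbs).
-/

open Finset

theorem sub_le_mul_log_div {p q : ℝ} (hp : 0 < p) (hq : 0 < q) :
    p - q ≤ p * Real.log (p / q) := by
  have hlog := Real.one_sub_inv_le_log_of_pos (div_pos hp hq)
  rw [inv_div] at hlog
  calc p - q = p * (1 - q / p) := by field_simp
    _ ≤ p * Real.log (p / q) := mul_le_mul_of_nonneg_left hlog hp.le

theorem sum_mul_le_sum_mul_of_eq_add_log_div {ι : Type*} [Fintype ι] {p q f g : ι → ℝ}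
    (hp : ∀ i, 0 ≤ p i) (hq : ∀ i, 0 ≤ q i) (hqp : ∑ i, q i ≤ ∑ i, p i)
    (hfg : ∀ i, 0 < p i → 0 < q i ∧ f i = g i + Real.log (p i / q i)) :
    ∑ i, p i * g i ≤ ∑ i, p i * f i := by
  have hpoint : ∀ i, p i * g i + (p i - q i) ≤ p i * f i := by
    intro i
    rcases (hp i).eq_or_lt with h0 | hpos
    · simp [← h0, hq i]
    · obtain ⟨hqpos, hf⟩ := hfg i hpos
      rw [hf, mul_add]
      linarith [sub_le_mul_log_div hpos hqpos]
  have htotal := sum_le_sum fun i (_ : i ∈ univ) => hpoint i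
  rw [sum_add_distrib, sum_sub_distrib] at htotal
  linarith

theorem le_sum_sum {M α β : Type*} [AddCommMonoid M] [PartialOrder M] [IsOrderedAddMonoid M]
    [Fintype α] [Fintype β] {f : α → β → M} (hf : ∀ a b, 0 ≤ f a b) (a : α) (b : β) :
    f a b ≤ ∑ a', ∑ b', f a' b' :=
  (single_le_sum (fun b' _ => hf a b') (mem_univ b)).trans
    (single_le_sum (fun a' _ => sum_nonneg fun b' _ => hf a' b') (mem_univ a))

theorem le_sum_sum_sum {M α β γ : Type*} [AddCommMonoid M] [PartialOrder M]
    [IsOrderedAddMonoid M] [Fintype α] [Fintype β] [Fintype γ] {f : α → β → γ → M}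
    (hf : ∀ a b c, 0 ≤ f a b c)
    (a : α) (b : β) (c : γ) : f a b c ≤ ∑ a', ∑ b', ∑ c', f a' b' c' :=
  (le_sum_sum (hf a) b c).trans
    (single_le_sum (fun a' _ => sum_nonneg fun b' _ => sum_nonneg fun c' _ => hf a' b' c')
      (mem_univ a))

section
variable {X A V B : Type*} [Fintype X] [Fintype A] [Fintype V] [Fintype B]
  {p : X → A → V → B → ℝ} {pX : X → ℝ} {pA : A → ℝ} {pV : V → ℝ} {pB : B → ℝ}
  {pXB : X → B → ℝ} {pXV : X → V → ℝ} {pXAV : X → A → V → ℝ} {pXBV : X → B → V → ℝ}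
  {pAB : A → B → ℝ} {pBV : B → V → ℝ}

theorem sum_marginal_AB_mul (hpAB : ∀ a b, pAB a b = ∑ x, ∑ v, p x a v b)
    (G : A → B → ℝ) :
    ∑ a, ∑ b, pAB a b * G a b = ∑ x, ∑ a, ∑ v, ∑ b, p x a v b * G a b := by
  simp only [hpAB, sum_mul]
  exact (sum_congr rfl fun a _ => sum_comm.trans (sum_congr rfl fun x _ => sum_comm)).trans
    sum_comm

theorem sum_marginal_XBV_mul (hpXBV : ∀ x b v, pXBV x b v = ∑ a, p x a v b)
    (H : X → B → V → ℝ) :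
    ∑ x, ∑ b, ∑ v, pXBV x b v * H x b v = ∑ x, ∑ a, ∑ v, ∑ b, p x a v b * H x b v := by
  simp only [hpXBV, sum_mul]
  exact sum_congr rfl fun x _ => (sum_congr rfl fun b _ => sum_comm).trans
    (sum_comm.trans (sum_congr rfl fun a _ => sum_comm))

theorem log_ratio_eq_add_log_div_reference (hnn : ∀ x a v b, 0 ≤ p x a v b)
    (hpX : ∀ x, pX x = ∑ a, ∑ v, ∑ b, p x a v b)
    (hpA : ∀ a, pA a = ∑ x, ∑ v, ∑ b, p x a v b)
    (hpV : ∀ v, pV v = ∑ x, ∑ a, ∑ b, p x a v b)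
    (hpB : ∀ b, pB b = ∑ x, ∑ a, ∑ v, p x a v b)
    (hpXV : ∀ x v, pXV x v = ∑ a, ∑ b, p x a v b)
    (hpXAV : ∀ x a v, pXAV x a v = ∑ b, p x a v b)
    (hpXBV : ∀ x b v, pXBV x b v = ∑ a, p x a v b)
    (hpAB : ∀ a b, pAB a b = ∑ x, ∑ v, p x a v b)
    (hmarkov : ∀ x a v b, 0 < pX x → p x a v b * pX x = pXAV x a v * pXB x b)
    (hindep : ∀ b v, pBV b v = pB b * pV v)
    (hcond : ∀ x b v, 0 < pX x → pXBV x b v * pX x = pXB x b * pXV x v)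
    {x : X} {a : A} {v : V} {b : B} (hp : 0 < p x a v b) :
    0 < pX x * pV v * (pXAV x a v / pXV x v) * (pAB a b / pA a) ∧
      Real.log (pXBV x b v / (pX x * pBV b v)) = Real.log (pAB a b / (pA a * pB b)) +
        Real.log (p x a v b / (pX x * pV v * (pXAV x a v / pXV x v) * (pAB a b / pA a))) := by
  have hX : 0 < pX x := hp.trans_le (hpX x ▸ le_sum_sum_sum (hnn x) a v b)
  have hA : 0 < pA a := hp.trans_le (hpA a ▸ le_sum_sum_sum (fun x v b => hnn x a v b) x v b)
  have hV : 0 < pV v := hp.trans_le (hpV v ▸ le_sum_sum_sum (fun x a b => hnn x a v b) x a b)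
  have hB : 0 < pB b := hp.trans_le (hpB b ▸ le_sum_sum_sum (fun x a v => hnn x a v b) x a v)
  have hXV : 0 < pXV x v := hp.trans_le (hpXV x v ▸ le_sum_sum (fun a b => hnn x a v b) a b)
  have hAB : 0 < pAB a b := hp.trans_le (hpAB a b ▸ le_sum_sum (fun x v => hnn x a v b) x v)
  have hXAV : 0 < pXAV x a v :=
    hp.trans_le (hpXAV x a v ▸ single_le_sum (fun b _ => hnn x a v b) (mem_univ b))
  have hXBV : 0 < pXBV x b v :=
    hp.trans_le (hpXBV x b v ▸ single_le_sum (fun a _ => hnn x a v b) (mem_univ a))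
  have hfactor : p x a v b * pXV x v = pXBV x b v * pXAV x a v :=
    mul_left_cancel₀ hX.ne' (by
      linear_combination pXV x v * hmarkov x a v b hX - pXAV x a v * hcond x b v hX)
  refine ⟨by positivity, ?_⟩
  rw [← Real.log_mul (by positivity) (by positivity), hindep]
  congr 1
  field_simp
  exact hfactor.symm

theorem reference_nonneg (hnn : ∀ x a v b, 0 ≤ p x a v b)
    (hpX : ∀ x, pX x = ∑ a, ∑ v, ∑ b, p x a v b)
    (hpA : ∀ a, pA a = ∑ x, ∑ v, ∑ b, p x a v b)
    (hpV : ∀ v, pV v = ∑ x, ∑ a, ∑ b, p x a v b)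
    (hpXV : ∀ x v, pXV x v = ∑ a, ∑ b, p x a v b)
    (hpXAV : ∀ x a v, pXAV x a v = ∑ b, p x a v b)
    (hpAB : ∀ a b, pAB a b = ∑ x, ∑ v, p x a v b) (x : X) (a : A) (v : V) (b : B) :
    0 ≤ pX x * pV v * (pXAV x a v / pXV x v) * (pAB a b / pA a) := by
  simp only [hpX, hpA, hpV, hpXV, hpXAV, hpAB]
  refine mul_nonneg (mul_nonneg (mul_nonneg ?_ ?_) (div_nonneg ?_ ?_)) (div_nonneg ?_ ?_) <;>
    repeat' first | exact hnn _ _ _ _ | refine sum_nonneg fun _ _ => ?_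

-- Where a marginal vanishes the division returns `0`, so the reference law may lose mass.
theorem reference_sum_le_one (hnn : ∀ x a v b, 0 ≤ p x a v b)
    (hsum : ∑ x, ∑ a, ∑ v, ∑ b, p x a v b = 1)
    (hpX : ∀ x, pX x = ∑ a, ∑ v, ∑ b, p x a v b)
    (hpA : ∀ a, pA a = ∑ x, ∑ v, ∑ b, p x a v b)
    (hpV : ∀ v, pV v = ∑ x, ∑ a, ∑ b, p x a v b)
    (hpXV : ∀ x v, pXV x v = ∑ a, ∑ b, p x a v b)
    (hpXAV : ∀ x a v, pXAV x a v = ∑ b, p x a v b)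
    (hpAB : ∀ a b, pAB a b = ∑ x, ∑ v, p x a v b) :
    ∑ x, ∑ a, ∑ v, ∑ b, pX x * pV v * (pXAV x a v / pXV x v) * (pAB a b / pA a) ≤ 1 := by
  have hX : ∀ x, 0 ≤ pX x := fun x => hpX x ▸
    sum_nonneg fun a _ => sum_nonneg fun v _ => sum_nonneg fun b _ => hnn x a v b
  have hV : ∀ v, 0 ≤ pV v := fun v => hpV v ▸
    sum_nonneg fun x _ => sum_nonneg fun a _ => sum_nonneg fun b _ => hnn x a v b
  have hXAV : ∀ x a v, 0 ≤ pXAV x a v / pXV x v := fun x a v => by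
    rw [hpXAV, hpXV]
    exact div_nonneg (sum_nonneg fun b _ => hnn x a v b)
      (sum_nonneg fun a _ => sum_nonneg fun b _ => hnn x a v b)
  have hXAV_le : ∀ x v, ∑ a, pXAV x a v / pXV x v ≤ 1 := fun x v => by
    rw [← sum_div, hpXV]
    simp only [hpXAV]
    exact div_self_le_one _
  have hAB_le : ∀ a, ∑ b, pAB a b / pA a ≤ 1 := fun a => by
    rw [← sum_div, hpA]
    simp only [hpAB]
    rw [sum_comm, sum_congr rfl fun x _ => sum_comm]
    exact div_self_le_one _
  have hX1 : ∑ x, pX x = 1 := by simp only [hpX]; exact hsum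
  have hV1 : ∑ v, pV v = 1 := by
    simp only [hpV]
    exact (sum_comm.trans (sum_congr rfl fun x _ => sum_comm)).trans hsum
  calc ∑ x, ∑ a, ∑ v, ∑ b, pX x * pV v * (pXAV x a v / pXV x v) * (pAB a b / pA a)
      ≤ ∑ x, ∑ a, ∑ v, pX x * pV v * (pXAV x a v / pXV x v) := by
        gcongr with x _ a _ v _
        rw [← mul_sum]
        exact mul_le_of_le_one_right (mul_nonneg (mul_nonneg (hX x) (hV v)) (hXAV x a v))
          (hAB_le a)
    _ = ∑ x, ∑ v, pX x * pV v * ∑ a, pXAV x a v / pXV x v := by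
        simp only [mul_sum]
        exact sum_congr rfl fun x _ => sum_comm
    _ ≤ ∑ x, ∑ v, pX x * pV v :=
        sum_le_sum fun x _ => sum_le_sum fun v _ =>
          mul_le_of_le_one_right (mul_nonneg (hX x) (hV v)) (hXAV_le x v)
    _ = 1 := by rw [← sum_mul_sum, hX1, hV1, one_mul]

end

theorem stmt_7_general {X A V B : Type*} [Fintype X] [Fintype A] [Fintype V] [Fintype B]
    (p : X → A → V → B → ℝ)
    (hnn : ∀ x a v b, 0 ≤ p x a v b)
    (hsum : ∑ x, ∑ a, ∑ v, ∑ b, p x a v b = 1)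
    (pX : X → ℝ) (pA : A → ℝ) (pV : V → ℝ) (pB : B → ℝ)
    (pXB : X → B → ℝ) (pXV : X → V → ℝ) (pXAV : X → A → V → ℝ)
    (pXBV : X → B → V → ℝ) (pAB : A → B → ℝ) (pBV : B → V → ℝ)
    (hpX : ∀ x, pX x = ∑ a, ∑ v, ∑ b, p x a v b)
    (hpA : ∀ a, pA a = ∑ x, ∑ v, ∑ b, p x a v b)
    (hpV : ∀ v, pV v = ∑ x, ∑ a, ∑ b, p x a v b)
    (hpB : ∀ b, pB b = ∑ x, ∑ a, ∑ v, p x a v b)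
    (hpXV : ∀ x v, pXV x v = ∑ a, ∑ b, p x a v b)
    (hpXAV : ∀ x a v, pXAV x a v = ∑ b, p x a v b)
    (hpXBV : ∀ x b v, pXBV x b v = ∑ a, p x a v b)
    (hpAB : ∀ a b, pAB a b = ∑ x, ∑ v, p x a v b)
    -- Markov: `z_p^j` is conditionally independent of `(z_p^i, z_v^i)` given `x^i`
    (hmarkov : ∀ x a v b, 0 < pX x → p x a v b * pX x = pXAV x a v * pXB x b)
    -- independence of `z_p^j` and `z_v^i`, marginally and conditionally on `x^i`
    (hindep : ∀ b v, pBV b v = pB b * pV v)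
    (hcond : ∀ x b v, 0 < pX x → pXBV x b v * pX x = pXB x b * pXV x v) :
    ∑ a, ∑ b, pAB a b * Real.log (pAB a b / (pA a * pB b))
      ≤ ∑ x, ∑ b, ∑ v, pXBV x b v * Real.log (pXBV x b v / (pX x * pBV b v)) := by
  have hmass := reference_sum_le_one hnn hsum hpX hpA hpV hpXV hpXAV hpAB
  rw [← hsum] at hmass
  rw [sum_marginal_AB_mul hpAB, sum_marginal_XBV_mul hpXBV]
  simp only [← Fintype.sum_prod_type'] at hmass ⊢
  refine sum_mul_le_sum_mul_of_eq_add_log_div (fun _ => hnn ..)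
    (fun _ => reference_nonneg hnn hpX hpA hpV hpXV hpXAV hpAB ..) hmass ?_
  rintro ⟨x, a, v, b⟩ hp
  exact log_ratio_eq_add_log_div_reference hnn hpX hpA hpV hpB hpXV hpXAV hpXBV hpAB
    hmarkov hindep hcond hp

/-- Cross-view MI lower bound: `I(x^i; z_p^j, z_v^i) ≥ I(z_p^i; z_p^j)`.
`X` is the type of poses `x^i`, `A` of `z_p^i`, `V` of `z_v^i`, `B` of `z_p^j`;
`p` is the joint pmf of `(x^i, z_p^i, z_v^i, z_p^j)`. -/
theorem stmt_7 {X A V B : Type*} [Fintype X] [Fintype A] [Fintype V] [Fintype B]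
    (p : X → A → V → B → ℝ)
    (hnn : ∀ x a v b, 0 ≤ p x a v b)
    (hsum : ∑ x, ∑ a, ∑ v, ∑ b, p x a v b = 1)
    (pX : X → ℝ) (pA : A → ℝ) (pV : V → ℝ) (pB : B → ℝ)
    (pXB : X → B → ℝ) (pXV : X → V → ℝ) (pXAV : X → A → V → ℝ)
    (pXBV : X → B → V → ℝ) (pAB : A → B → ℝ) (pAV : A → V → ℝ) (pBV : B → V → ℝ)
    (hpX : ∀ x, pX x = ∑ a, ∑ v, ∑ b, p x a v b)
    (hpA : ∀ a, pA a = ∑ x, ∑ v, ∑ b, p x a v b)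
    (hpV : ∀ v, pV v = ∑ x, ∑ a, ∑ b, p x a v b)
    (hpB : ∀ b, pB b = ∑ x, ∑ a, ∑ v, p x a v b)
    (hpXB : ∀ x b, pXB x b = ∑ a, ∑ v, p x a v b)
    (hpXV : ∀ x v, pXV x v = ∑ a, ∑ b, p x a v b)
    (hpXAV : ∀ x a v, pXAV x a v = ∑ b, p x a v b)
    (hpXBV : ∀ x b v, pXBV x b v = ∑ a, p x a v b)
    (hpAB : ∀ a b, pAB a b = ∑ x, ∑ v, p x a v b)
    (hpAV : ∀ a v, pAV a v = ∑ x, ∑ b, p x a v b)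
    (hpBV : ∀ b v, pBV b v = ∑ x, ∑ a, p x a v b)
    -- Markov: `z_p^j` is conditionally independent of `(z_p^i, z_v^i)` given `x^i`
    (hmarkov : ∀ x a v b, 0 < pX x → p x a v b * pX x = pXAV x a v * pXB x b)
    -- independence of `z_p^j` and `z_v^i`, marginally and conditionally on `x^i`
    (hindep : ∀ b v, pBV b v = pB b * pV v)
    (hcond : ∀ x b v, 0 < pX x → pXBV x b v * pX x = pXB x b * pXV x v)
    -- in particular `I(z_v^i; z_p^j) = 0` and `I(z_p^i; z_v^i) = 0`
    (hIvb : ∑ b, ∑ v, pBV b v * Real.log (pBV b v / (pB b * pV v)) = 0)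
    (hIav : ∑ a, ∑ v, pAV a v * Real.log (pAV a v / (pA a * pV v)) = 0) :
    ∑ a, ∑ b, pAB a b * Real.log (pAB a b / (pA a * pB b))
      ≤ ∑ x, ∑ b, ∑ v, pXBV x b v * Real.log (pXBV x b v / (pX x * pBV b v)) :=
  stmt_7_general p hnn hsum pX pA pV pB pXB pXV pXAV pXBV pAB pBV hpX hpA hpV hpB hpXV hpXAV hpXBV
    hpAB hmarkov hindep hcond
end

section
/- Combining the decomposition and DPI steps: under the disentanglement assumptions, I(x^i; z_p^j, z_v^i) ≥ I(z_p^i; z_p^j) + H(z_v^i). -/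
open Finset Real

/-! Conditional independence of `z_p^j` and `z_v^i` given `x^i`, together with their marginal
independence, splits `I(x^i; z_p^j, z_v^i)` into `I(x^i; z_p^j) + I(x^i; z_v^i)`. As `z_v^i` is a
function of `x^i`, `I(x^i; z_v^i) = H(z_v^i)`; as `z_p^i → x^i → z_p^j` is a Markov chain, the
data-processing inequality gives `I(z_p^i; z_p^j) ≤ I(x^i; z_p^j)`. -/

lemma sub_le_mul_log_div_s12 {f g : ℝ} (hf : 0 ≤ f) (hg : 0 ≤ g) (hfg : 0 < f → 0 < g) :
    f - g ≤ f * log (f / g) := by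
  rcases hf.eq_or_lt with rfl | hf
  · simpa using hg
  have hg := hfg hf
  calc f - g = f * (1 - (f / g)⁻¹) := by field_simp
    _ ≤ f * log (f / g) :=
      mul_le_mul_of_nonneg_left (one_sub_inv_le_log_of_pos (by positivity)) hf.le

lemma le_sum_univ {ι : Type*} [Fintype ι] {f : ι → ℝ} (hf : ∀ i, 0 ≤ f i) (i : ι) :
    f i ≤ ∑ j, f j :=
  single_le_sum (fun j _ => hf j) (mem_univ i)

lemma le_sum_sum_s12 {ι κ : Type*} [Fintype ι] [Fintype κ] {f : ι → κ → ℝ} (hf : ∀ i k, 0 ≤ f i k)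
    (i : ι) (k : κ) : f i k ≤ ∑ i', ∑ k', f i' k' :=
  (le_sum_univ (hf i) k).trans (le_sum_univ (fun i' => sum_nonneg fun k' _ => hf i' k') i)

section
variable {X Y : Type*} [Fintype X] [Fintype Y]

noncomputable def mutualInfo (pXY : X → Y → ℝ) (pX : X → ℝ) (pY : Y → ℝ) : ℝ :=
  ∑ x, ∑ y, pXY x y * log (pXY x y / (pX x * pY y))

theorem mutualInfo_eq_entropy_of_deterministic (q : X → Y → ℝ) (hq : ∀ x y, 0 ≤ q x y)
    {qX : X → ℝ} {qY : Y → ℝ} (hX : ∀ x, qX x = ∑ y, q x y) (hY : ∀ y, qY y = ∑ x, q x y)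
    (hdet : ∀ x y y', 0 < q x y → 0 < q x y' → y = y') :
    mutualInfo q qX qY = -∑ y, qY y * log (qY y) := by
  have hterm : ∀ x y, q x y * log (q x y / (qX x * qY y)) = -(q x y * log (qY y)) := by
    intro x y
    rcases (hq x y).eq_or_lt with h0 | hpos
    · simp [← h0]
    have hqX : qX x = q x y := by
      rw [hX, sum_eq_single y (fun y' _ hy' => ?_) (by simp)]
      exact ((hq x y').eq_or_lt.resolve_right fun h => hy' (hdet x y' y h hpos)).symm
    rw [hqX, div_mul_cancel_left₀ hpos.ne', log_inv, mul_neg]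
  unfold mutualInfo
  simp only [hterm, sum_neg_distrib]
  rw [sum_comm]
  simp only [← sum_mul, ← hY]
end

section
variable {X A B : Type*} [Fintype X] [Fintype A] [Fintype B]

lemma sum_sum_sum_mul_div_eq (r : X → A → B → ℝ) {rA : A → ℝ} {rAB : A → B → ℝ}
    (hA : ∀ a, rA a = ∑ x, ∑ b, r x a b) (hAB : ∀ a b, rAB a b = ∑ x, r x a b) :
    ∑ x, ∑ a, ∑ b, (∑ b', r x a b') * rAB a b / rA a = ∑ x, ∑ a, ∑ b, r x a b := by
  have hA' : ∀ a, ∑ b, rAB a b = rA a := fun a => by simp only [hAB, hA]; exact sum_comm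
  rw [sum_comm, sum_comm (γ := X)]
  refine sum_congr rfl fun a _ => ?_
  calc ∑ x, ∑ b, (∑ b', r x a b') * rAB a b / rA a = rA a * rA a / rA a := by
        simp only [← sum_div, ← mul_sum, ← sum_mul, hA', ← hA]
    _ = ∑ x, ∑ b, r x a b := by rw [mul_self_div_self, hA]

lemma mutualInfo_sub_mutualInfo_eq_of_markov (r : X → A → B → ℝ) (hr : ∀ x a b, 0 ≤ r x a b)
    {rX : X → ℝ} {rA : A → ℝ} {rB : B → ℝ} {rXB : X → B → ℝ} {rAB : A → B → ℝ}
    (hX : ∀ x, rX x = ∑ a, ∑ b, r x a b) (hA : ∀ a, rA a = ∑ x, ∑ b, r x a b)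
    (hB : ∀ b, rB b = ∑ x, ∑ a, r x a b) (hXB : ∀ x b, rXB x b = ∑ a, r x a b)
    (hAB : ∀ a b, rAB a b = ∑ x, r x a b)
    (hmarkov : ∀ x a b, 0 < rX x → r x a b * rX x = (∑ b', r x a b') * rXB x b) :
    mutualInfo rXB rX rB - mutualInfo rAB rA rB
      = ∑ x, ∑ a, ∑ b, r x a b * log (r x a b / ((∑ b', r x a b') * rAB a b / rA a)) := by
  have hterm : ∀ x a b, r x a b * log (rXB x b / (rX x * rB b))
      - r x a b * log (rAB a b / (rA a * rB b))
      = r x a b * log (r x a b / ((∑ b', r x a b') * rAB a b / rA a)) := by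
    intro x a b
    rcases (hr x a b).eq_or_lt with h0 | h
    · simp [← h0]
    have hrX : 0 < rX x := h.trans_le (hX x ▸ le_sum_sum_s12 (hr x) a b)
    have hrA : 0 < rA a := h.trans_le (hA a ▸ le_sum_sum_s12 (fun x b => hr x a b) x b)
    have hrB : 0 < rB b := h.trans_le (hB b ▸ le_sum_sum_s12 (fun x a => hr x a b) x a)
    have hrXB : 0 < rXB x b := h.trans_le (hXB x b ▸ le_sum_univ (fun a => hr x a b) a)
    have hrAB : 0 < rAB a b := h.trans_le (hAB a b ▸ le_sum_univ (fun x => hr x a b) x)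
    have hrXA : 0 < ∑ b', r x a b' := h.trans_le (le_sum_univ (hr x a) b)
    have hratio : rXB x b / (rX x * rB b) / (rAB a b / (rA a * rB b))
        = r x a b / ((∑ b', r x a b') * rAB a b / rA a) := by
      field_simp
      linear_combination (hmarkov x a b hrX).symm
    rw [← mul_sub, ← log_div (by positivity) (by positivity), hratio]
  have hIXB : mutualInfo rXB rX rB = ∑ x, ∑ a, ∑ b, r x a b * log (rXB x b / (rX x * rB b)) := by
    refine sum_congr rfl fun x _ => ?_
    rw [sum_comm]
    simp only [← sum_mul, ← hXB]
  have hIAB : mutualInfo rAB rA rB = ∑ x, ∑ a, ∑ b, r x a b * log (rAB a b / (rA a * rB b)) := by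
    rw [sum_comm]
    refine sum_congr rfl fun a _ => ?_
    rw [sum_comm]
    simp only [← sum_mul, ← hAB]
  simp only [hIXB, hIAB, ← sum_sub_distrib, hterm]

-- `I(X;B) - I(A;B)` is the relative entropy of `r` from `r(x,a) r(a,b) / r(a)`, a function of
-- the same total mass as `r`.
theorem mutualInfo_le_mutualInfo_of_markov (r : X → A → B → ℝ) (hr : ∀ x a b, 0 ≤ r x a b)
    {rX : X → ℝ} {rA : A → ℝ} {rB : B → ℝ} {rXB : X → B → ℝ} {rAB : A → B → ℝ}
    (hX : ∀ x, rX x = ∑ a, ∑ b, r x a b) (hA : ∀ a, rA a = ∑ x, ∑ b, r x a b)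
    (hB : ∀ b, rB b = ∑ x, ∑ a, r x a b) (hXB : ∀ x b, rXB x b = ∑ a, r x a b)
    (hAB : ∀ a b, rAB a b = ∑ x, r x a b)
    (hmarkov : ∀ x a b, 0 < rX x → r x a b * rX x = (∑ b', r x a b') * rXB x b) :
    mutualInfo rAB rA rB ≤ mutualInfo rXB rX rB := by
  rw [← sub_nonneg, mutualInfo_sub_mutualInfo_eq_of_markov r hr hX hA hB hXB hAB hmarkov]
  have hrXA : ∀ x a, 0 ≤ ∑ b, r x a b := fun x a => sum_nonneg fun b _ => hr x a b
  have hrA : ∀ a, 0 ≤ rA a := fun a => hA a ▸ sum_nonneg fun x _ => hrXA x a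
  have hrAB : ∀ a b, 0 ≤ rAB a b := fun a b => hAB a b ▸ sum_nonneg fun x _ => hr x a b
  calc (0 : ℝ) = ∑ x, ∑ a, ∑ b, (r x a b - (∑ b', r x a b') * rAB a b / rA a) := by
        simp only [sum_sub_distrib, sum_sum_sum_mul_div_eq r hA hAB, sub_self]
    _ ≤ _ := by
      gcongr with x _ a _ b _
      refine sub_le_mul_log_div_s12 (hr x a b)
        (div_nonneg (mul_nonneg (hrXA x a) (hrAB a b)) (hrA a)) fun h => ?_
      exact div_pos (mul_pos (h.trans_le (le_sum_univ (hr x a) b))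
        (h.trans_le (hAB a b ▸ le_sum_univ (fun x => hr x a b) x)))
        (h.trans_le (hA a ▸ le_sum_sum_s12 (fun x b => hr x a b) x b))
end

section
variable {X B V : Type*} [Fintype X] [Fintype B] [Fintype V]

theorem mutualInfo_prod_eq_add_of_condIndep (s : X → B → V → ℝ) (hs : ∀ x b v, 0 ≤ s x b v)
    {sX : X → ℝ} {sB : B → ℝ} {sV : V → ℝ} {sXB : X → B → ℝ} {sXV : X → V → ℝ}
    {sBV : B → V → ℝ}
    (hX : ∀ x, sX x = ∑ b, ∑ v, s x b v) (hB : ∀ b, sB b = ∑ x, ∑ v, s x b v)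
    (hV : ∀ v, sV v = ∑ x, ∑ b, s x b v) (hXB : ∀ x b, sXB x b = ∑ v, s x b v)
    (hXV : ∀ x v, sXV x v = ∑ b, s x b v) (hBV : ∀ b v, sBV b v = sB b * sV v)
    (hcond : ∀ x b v, 0 < sX x → s x b v * sX x = sXB x b * sXV x v) :
    ∑ x, ∑ b, ∑ v, s x b v * log (s x b v / (sX x * sBV b v))
      = mutualInfo sXB sX sB + mutualInfo sXV sX sV := by
  have hterm : ∀ x b v, s x b v * log (s x b v / (sX x * sBV b v))
      = s x b v * log (sXB x b / (sX x * sB b)) + s x b v * log (sXV x v / (sX x * sV v)) := by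
    intro x b v
    rcases (hs x b v).eq_or_lt with h0 | hpos
    · simp [← h0]
    have hsX : 0 < sX x := hpos.trans_le (hX x ▸ le_sum_sum_s12 (hs x) b v)
    have hsB : 0 < sB b := hpos.trans_le (hB b ▸ le_sum_sum_s12 (fun x v => hs x b v) x v)
    have hsV : 0 < sV v := hpos.trans_le (hV v ▸ le_sum_sum_s12 (fun x b => hs x b v) x b)
    have hsXB : 0 < sXB x b := hpos.trans_le (hXB x b ▸ le_sum_univ (hs x b) v)
    have hsXV : 0 < sXV x v := hpos.trans_le (hXV x v ▸ le_sum_univ (fun b => hs x b v) b)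
    have hsplit : s x b v / (sX x * sBV b v)
        = sXB x b / (sX x * sB b) * (sXV x v / (sX x * sV v)) := by
      rw [hBV, div_mul_div_comm, ← hcond x b v hsX]
      field_simp
    rw [hsplit, log_mul (by positivity) (by positivity), mul_add]
  unfold mutualInfo
  simp only [hterm, sum_add_distrib, hXB, hXV, sum_mul]
  congr 1
  exact sum_congr rfl fun x _ => sum_comm
end

/-- `X` is the type of `x^i`, `A` of `z_p^i`, `V` of `z_v^i`, `B` of `z_p^j`;
`p` is the joint pmf of `(x^i, z_p^i, z_v^i, z_p^j)`. -/
theorem stmt_12_general {X A V B : Type*} [Fintype X] [Fintype A] [Fintype V] [Fintype B]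
    (p : X → A → V → B → ℝ)
    (hnn : ∀ x a v b, 0 ≤ p x a v b)
    (pX : X → ℝ) (pA : A → ℝ) (pV : V → ℝ) (pB : B → ℝ)
    (pXB : X → B → ℝ) (pXV : X → V → ℝ) (pXAV : X → A → V → ℝ)
    (pXBV : X → B → V → ℝ) (pAB : A → B → ℝ) (pBV : B → V → ℝ)
    (hpX : ∀ x, pX x = ∑ a, ∑ v, ∑ b, p x a v b)
    (hpA : ∀ a, pA a = ∑ x, ∑ v, ∑ b, p x a v b)
    (hpV : ∀ v, pV v = ∑ x, ∑ a, ∑ b, p x a v b)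
    (hpB : ∀ b, pB b = ∑ x, ∑ a, ∑ v, p x a v b)
    (hpXB : ∀ x b, pXB x b = ∑ a, ∑ v, p x a v b)
    (hpXV : ∀ x v, pXV x v = ∑ a, ∑ b, p x a v b)
    (hpXAV : ∀ x a v, pXAV x a v = ∑ b, p x a v b)
    (hpXBV : ∀ x b v, pXBV x b v = ∑ a, p x a v b)
    (hpAB : ∀ a b, pAB a b = ∑ x, ∑ v, p x a v b)
    -- Markov: `z_p^j` is conditionally independent of `(z_p^i, z_v^i)` given `x^i`
    (hmarkov : ∀ x a v b, 0 < pX x → p x a v b * pX x = pXAV x a v * pXB x b)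
    -- (a) independence of `z_p^j` and `z_v^i`, marginally and conditionally on `x^i`
    (hindep : ∀ b v, pBV b v = pB b * pV v)
    (hcond : ∀ x b v, 0 < pX x → pXBV x b v * pX x = pXB x b * pXV x v)
    -- (c) `z_v^i` is a deterministic function of `x^i`
    (hdet : ∀ x v v', 0 < pXV x v → 0 < pXV x v' → v = v') :
    (∑ a, ∑ b, pAB a b * Real.log (pAB a b / (pA a * pB b)))
        + (-∑ v, pV v * Real.log (pV v))
      ≤ ∑ x, ∑ b, ∑ v, pXBV x b v * Real.log (pXBV x b v / (pX x * pBV b v)) := by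
  have hXBV : ∀ x b v, 0 ≤ pXBV x b v := fun x b v =>
    hpXBV x b v ▸ sum_nonneg fun a _ => hnn x a v b
  have hXV : ∀ x v, 0 ≤ pXV x v := fun x v =>
    hpXV x v ▸ sum_nonneg fun a _ => sum_nonneg fun b _ => hnn x a v b
  have hsplit := mutualInfo_prod_eq_add_of_condIndep pXBV hXBV
    (fun x => by
      simp only [hpX, hpXBV]; rw [sum_comm_cycle]; exact sum_congr rfl fun _ _ => sum_comm)
    (fun b => by simp only [hpB, hpXBV]; exact sum_congr rfl fun _ _ => sum_comm)
    (fun v => by simp only [hpV, hpXBV]; exact sum_congr rfl fun _ _ => sum_comm)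
    (fun x b => by simp only [hpXB, hpXBV]; exact sum_comm)
    (fun x v => by simp only [hpXV, hpXBV]; exact sum_comm) hindep hcond
  have hdpi := mutualInfo_le_mutualInfo_of_markov (fun x a b => ∑ v, p x a v b)
    (fun x a b => sum_nonneg fun v _ => hnn x a v b) (rX := pX) (rA := pA)
    (fun x => by rw [hpX]; exact sum_congr rfl fun _ _ => sum_comm)
    (fun a => by rw [hpA]; exact sum_congr rfl fun _ _ => sum_comm) hpB hpXB hpAB
    (fun x a b hx => by
      rw [sum_mul, sum_comm, sum_mul]
      exact sum_congr rfl fun v _ => by rw [hmarkov x a v b hx, hpXAV])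
  have hent := mutualInfo_eq_entropy_of_deterministic pXV hXV (qX := pX) (qY := pV)
    (fun x => by simp only [hpX, hpXV]; exact sum_comm) (fun v => by simp only [hpV, hpXV]) hdet
  calc mutualInfo pAB pA pB + -∑ v, pV v * log (pV v)
      ≤ mutualInfo pXB pX pB + mutualInfo pXV pX pV := by
        rw [hent]; exact add_le_add_left hdpi _
    _ = _ := hsplit.symm

/-- `I(x^i; z_p^j, z_v^i) ≥ I(z_p^i; z_p^j) + H(z_v^i)`.
`X` is the type of poses `x^i`, `A` of `z_p^i`, `V` of `z_v^i`, `B` of `z_p^j`;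
`p` is the joint pmf of `(x^i, z_p^i, z_v^i, z_p^j)`. -/
theorem stmt_12 {X A V B : Type*} [Fintype X] [Fintype A] [Fintype V] [Fintype B]
    (p : X → A → V → B → ℝ)
    (hnn : ∀ x a v b, 0 ≤ p x a v b)
    (hsum : ∑ x, ∑ a, ∑ v, ∑ b, p x a v b = 1)
    (pX : X → ℝ) (pA : A → ℝ) (pV : V → ℝ) (pB : B → ℝ)
    (pXB : X → B → ℝ) (pXV : X → V → ℝ) (pXAV : X → A → V → ℝ)
    (pXBV : X → B → V → ℝ) (pAB : A → B → ℝ) (pAV : A → V → ℝ) (pBV : B → V → ℝ)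
    (hpX : ∀ x, pX x = ∑ a, ∑ v, ∑ b, p x a v b)
    (hpA : ∀ a, pA a = ∑ x, ∑ v, ∑ b, p x a v b)
    (hpV : ∀ v, pV v = ∑ x, ∑ a, ∑ b, p x a v b)
    (hpB : ∀ b, pB b = ∑ x, ∑ a, ∑ v, p x a v b)
    (hpXB : ∀ x b, pXB x b = ∑ a, ∑ v, p x a v b)
    (hpXV : ∀ x v, pXV x v = ∑ a, ∑ b, p x a v b)
    (hpXAV : ∀ x a v, pXAV x a v = ∑ b, p x a v b)
    (hpXBV : ∀ x b v, pXBV x b v = ∑ a, p x a v b)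
    (hpAB : ∀ a b, pAB a b = ∑ x, ∑ v, p x a v b)
    (hpAV : ∀ a v, pAV a v = ∑ x, ∑ b, p x a v b)
    (hpBV : ∀ b v, pBV b v = ∑ x, ∑ a, p x a v b)
    -- Markov: `z_p^j` is conditionally independent of `(z_p^i, z_v^i)` given `x^i`
    (hmarkov : ∀ x a v b, 0 < pX x → p x a v b * pX x = pXAV x a v * pXB x b)
    -- (a) independence of `z_p^j` and `z_v^i`, marginally and conditionally on `x^i`
    (hindep : ∀ b v, pBV b v = pB b * pV v)
    (hcond : ∀ x b v, 0 < pX x → pXBV x b v * pX x = pXB x b * pXV x v)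
    -- (b) `I(z_v^i; z_p^j) = 0` and `I(z_p^i; z_v^i) = 0`
    (hIvb : ∑ b, ∑ v, pBV b v * Real.log (pBV b v / (pB b * pV v)) = 0)
    (hIav : ∑ a, ∑ v, pAV a v * Real.log (pAV a v / (pA a * pV v)) = 0)
    -- (c) `z_v^i` is a deterministic function of `x^i`
    (hdet : ∀ x v v', 0 < pXV x v → 0 < pXV x v' → v = v') :
    (∑ a, ∑ b, pAB a b * Real.log (pAB a b / (pA a * pB b)))
        + (-∑ v, pV v * Real.log (pV v))
      ≤ ∑ x, ∑ b, ∑ v, pXBV x b v * Real.log (pXBV x b v / (pX x * pBV b v)) :=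
  stmt_12_general p hnn pX pA pV pB pXB pXV pXAV pXBV pAB pBV hpX hpA hpV hpB hpXB hpXV hpXAV hpXBV
    hpAB hmarkov hindep hcond hdet
end

section
/- Variational upper bound used in CLUB-style disentanglement: for random variables z_p, z_v with joint pmf p(z_p,z_v) and marginals p(z_p), p(z_v), taking the conditional pmf q(z_v|z_p) = p(z_v|z_p), one has E_{p(z_p,z_v)}[log p(z_v|z_p)] - E_{p(z_p)p(z_v)}[log p(z_v|z_p)] ≥ I(z_p; z_v). -/
theorem stmt_15 {P V : Type*} [Fintype P] [Fintype V]
    (p : P → V → ℝ)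
    (hpos : ∀ zp zv, 0 < p zp zv)
    (hsum : ∑ zp, ∑ zv, p zp zv = 1)
    (pP : P → ℝ) (pV : V → ℝ)
    (hpP : ∀ zp, pP zp = ∑ zv, p zp zv)
    (hpV : ∀ zv, pV zv = ∑ zp, p zp zv) :
    (∑ zp, ∑ zv, p zp zv * Real.log (p zp zv / pP zp))
        - (∑ zp, ∑ zv, pP zp * pV zv * Real.log (p zp zv / pP zp))
      ≥ ∑ zp, ∑ zv, p zp zv * Real.log (p zp zv / (pP zp * pV zv)) := by
  rcases isEmpty_or_nonempty V with hV | hV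
  · simp at hsum
  rcases isEmpty_or_nonempty P with hP | hP
  · simp at hsum
  have hpPpos : ∀ zp, 0 < pP zp := fun zp => by
    rw [hpP]; exact Finset.sum_pos (fun zv _ => hpos zp zv) Finset.univ_nonempty
  have hpVpos : ∀ zv, 0 < pV zv := fun zv => by
    rw [hpV]; exact Finset.sum_pos (fun zp _ => hpos zp zv) Finset.univ_nonempty
  have hpPsum : ∑ zp, pP zp = 1 := by
    simpa [hpP] using hsum
  -- Jensen: for each zv, ∑ zp pP zp * log (p zp zv / pP zp) ≤ log (pV zv)
  have key : ∀ zv, ∑ zp, pP zp * Real.log (p zp zv / pP zp) ≤ Real.log (pV zv) := by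
    intro zv
    have h := strictConcaveOn_log_Ioi.concaveOn.le_map_sum
      (t := Finset.univ) (w := pP) (p := fun zp => p zp zv / pP zp)
      (fun i _ => (hpPpos i).le) hpPsum
      (fun i _ => Set.mem_Ioi.mpr (div_pos (hpos i zv) (hpPpos i)))
    simp only [smul_eq_mul] at h
    have hs : ∑ zp, pP zp * (p zp zv / pP zp) = pV zv := by
      rw [hpV]
      exact Finset.sum_congr rfl fun i _ => mul_div_cancel₀ _ (hpPpos i).ne'
    rwa [hs] at h
  have main : ∑ zp, ∑ zv, pP zp * pV zv * Real.log (p zp zv / pP zp)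
      ≤ ∑ zv, pV zv * Real.log (pV zv) := by
    rw [Finset.sum_comm]
    apply Finset.sum_le_sum
    intro zv _
    have he : ∑ zp, pP zp * pV zv * Real.log (p zp zv / pP zp)
        = pV zv * ∑ zp, pP zp * Real.log (p zp zv / pP zp) := by
      rw [Finset.mul_sum]; exact Finset.sum_congr rfl fun i _ => by ring
    rw [he]
    exact mul_le_mul_of_nonneg_left (key zv) (hpVpos zv).le
  have split : ∀ zp zv, p zp zv * Real.log (p zp zv / (pP zp * pV zv))
      = p zp zv * Real.log (p zp zv / pP zp) - p zp zv * Real.log (pV zv) := by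
    intro zp zv
    rw [div_mul_eq_div_div, Real.log_div (div_pos (hpos zp zv) (hpPpos zp)).ne' (hpVpos zv).ne', mul_sub]
  have hrhs : ∑ zp, ∑ zv, p zp zv * Real.log (p zp zv / (pP zp * pV zv))
      = (∑ zp, ∑ zv, p zp zv * Real.log (p zp zv / pP zp))
        - ∑ zv, pV zv * Real.log (pV zv) := by
    have h1 : ∑ zp, ∑ zv, p zp zv * Real.log (pV zv)
        = ∑ zv, pV zv * Real.log (pV zv) := by
      rw [Finset.sum_comm]
      exact Finset.sum_congr rfl fun zv _ => by
        rw [← Finset.sum_mul, ← hpV]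
    simp only [split, Finset.sum_sub_distrib, h1]
  rw [hrhs]
  linarith [main]
end
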